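/- Let M, ε ∈ M_{d,T}(ℝ), set X = M + ε, and define r(A) = ‖A − X‖_F² and R(A) = ‖A − M‖_F². Then for every λ ∈ (0,1) and every A ∈ M_{d,T}(ℝ) with A ≠ M: R(A) ≤ (r(A) − ‖ε‖_F²)/(1−λ) + (1/(λ(1−λ)))·⟨ε, (A − M)/‖A − M‖_F⟩_F². -/

import Mathlib

open MeasureTheory ProbabilityTheory Matrix

noncomputable section

/-- Euclidean norm of a vector in `ℝ^n`. -/
def euclNorm {n : ℕ} (v : Fin n → ℝ) : ℝ := Real.sqrt (∑ i, v i ^ 2)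

/-- Frobenius inner product `⟨A,B⟩_F = trace (A Bᵀ)`. -/
def frobInner {d T : ℕ} (A B : Matrix (Fin d) (Fin T) ℝ) : ℝ := Matrix.trace (A * Bᵀ)

/-- Frobenius norm. -/
def frobNorm {d T : ℕ} (A : Matrix (Fin d) (Fin T) ℝ) : ℝ := Real.sqrt (frobInner A A)

/-- Operator norm (largest singular value) of a real matrix. -/
def opNorm {m n : ℕ} (A : Matrix (Fin m) (Fin n) ℝ) : ℝ :=
  sSup {c | ∃ x : Fin n → ℝ, euclNorm x = 1 ∧ c = euclNorm (A.mulVec x)}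

/-- The set of values whose supremum defines the sub-Gaussian norm of a random
vector `w` : `p^{-1/2} E(|⟨w, x⟩|^p)^{1/p}` for `‖x‖ = 1` and `p ∈ [1,∞)`. -/
def subgSet {Ω : Type} [MeasurableSpace Ω] (μ : Measure Ω) {n : ℕ} (w : Ω → Fin n → ℝ) :
    Set ℝ :=
  {y | ∃ x : Fin n → ℝ, euclNorm x = 1 ∧ ∃ p : ℝ, 1 ≤ p ∧
    y = p ^ (-(1 : ℝ) / 2) * (∫ ω, |∑ t, w ω t * x t| ^ p ∂μ) ^ (1 / p)}

/-- Sub-Gaussian norm of a random vector. -/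
def subgNorm {Ω : Type} [MeasurableSpace Ω] (μ : Measure Ω) {n : ℕ} (w : Ω → Fin n → ℝ) : ℝ :=
  sSup (subgSet μ w)

/-- `K̃ = max (K², K⁴)`. -/
def Ktilde (K : ℝ) : ℝ := max (K ^ 2) (K ^ 4)

/-- Assumption 1: the rows of `ε` are i.i.d. with invertible second-moment matrix `SigE`
(whose positive definite square root is `SigSqrt`), the whitened row is isotropic and has
finite sub-Gaussian norm `Ke`. -/
structure Assumption1 {Ω : Type} [MeasurableSpace Ω] (μ : Measure Ω)
    {d T : ℕ} (ε : Ω → Matrix (Fin d) (Fin T) ℝ)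
    (SigE SigSqrt : Matrix (Fin T) (Fin T) ℝ) (Ke : ℝ) : Prop where
  meas : ∀ i, Measurable fun ω => ε ω i
  indep : iIndepFun (fun i ω => ε ω i) μ
  ident : ∀ i j, IdentDistrib (fun ω => ε ω i) (fun ω => ε ω j) μ μ
  sqrt_posDef : SigSqrt.PosDef
  sqrt_mul_sqrt : SigSqrt * SigSqrt = SigE
  secondMoment : ∀ i t t', SigE t t' = ∫ ω, ε ω i t * ε ω i t' ∂μ
  isotropic : ∀ (i : Fin d) (t t' : Fin T),
    (∫ ω, Matrix.vecMul (ε ω i) SigSqrt⁻¹ t * Matrix.vecMul (ε ω i) SigSqrt⁻¹ t' ∂μ) =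
      if t = t' then 1 else 0
  bddSubg : ∀ i, BddAbove (subgSet μ fun ω => Matrix.vecMul (ε ω i) SigSqrt⁻¹)
  Ke_def : ∀ i, Ke = subgNorm μ fun ω => Matrix.vecMul (ε ω i) SigSqrt⁻¹

/-- The pseudo-inverse `Λ⁺ = Λᵀ (Λ Λᵀ)⁻¹` of a full-row-rank matrix. -/
def pinv {τ T : ℕ} (Λ : Matrix (Fin τ) (Fin T) ℝ) : Matrix (Fin T) (Fin τ) ℝ :=
  Λᵀ * (Λ * Λᵀ)⁻¹

/-- Assumption 2 (for `Λ`): the sub-Gaussian norm of the whitened first row of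
`ε̃ = ε Λ⁺` is finite and at most `Ke`. -/
def Assumption2 {Ω : Type} [MeasurableSpace Ω] (μ : Measure Ω)
    {d T τ : ℕ} (ε : Ω → Matrix (Fin d) (Fin T) ℝ)
    (SigE : Matrix (Fin T) (Fin T) ℝ) (Λ : Matrix (Fin τ) (Fin T) ℝ) (Ke : ℝ) : Prop :=
  ∃ SigTsqrt : Matrix (Fin τ) (Fin τ) ℝ, SigTsqrt.PosDef ∧
    SigTsqrt * SigTsqrt = (pinv Λ)ᵀ * SigE * pinv Λ ∧
    ∀ i, BddAbove (subgSet μ fun ω => Matrix.vecMul ((ε ω * pinv Λ) i) SigTsqrt⁻¹) ∧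
      subgNorm μ (fun ω => Matrix.vecMul ((ε ω * pinv Λ) i) SigTsqrt⁻¹) ≤ Ke

end

/-!
Write `v = A - M`, `n = ‖v‖` and `s = ⟨ε, v / n⟩`. Expanding `r A = ‖v - ε‖²` gives
`r A - ‖ε‖² = n² - 2 n s`, and the claimed bound minus `n²` is the square
`(λ n - s)² / (λ (1 - λ))`: it is the weighted Young inequality `2 n s ≤ λ n² + s² / λ`.
The Frobenius inner product is the Euclidean one on `Fin d × Fin T`, so this is an
inequality in an arbitrary real inner product space.
-/

open scoped RealInnerProductSpace

lemma sq_le_sub_two_mul_div_add_sq_div {n s lam : ℝ} (h0 : 0 < lam) (h1 : lam < 1) :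
    n ^ 2 ≤ (n ^ 2 - 2 * (n * s)) / (1 - lam) + 1 / (lam * (1 - lam)) * s ^ 2 := by
  have h1' : 0 < 1 - lam := sub_pos.2 h1
  have hsquare : (n ^ 2 - 2 * (n * s)) / (1 - lam) + 1 / (lam * (1 - lam)) * s ^ 2 - n ^ 2
      = (lam * n - s) ^ 2 / (lam * (1 - lam)) := by
    field_simp
    ring
  rw [← sub_nonneg, hsquare]
  positivity

theorem norm_sq_le_excess_div_add_inner_sq {E : Type*} [NormedAddCommGroup E]
    [InnerProductSpace ℝ E] (e v : E) {lam : ℝ} (h0 : 0 < lam) (h1 : lam < 1) :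
    ‖v‖ ^ 2 ≤ (‖v - e‖ ^ 2 - ‖e‖ ^ 2) / (1 - lam) +
      1 / (lam * (1 - lam)) * ⟪e, ‖v‖⁻¹ • v⟫ ^ 2 := by
  have hinner : ⟪e, v⟫ = ‖v‖ * ⟪e, ‖v‖⁻¹ • v⟫ := by
    rcases eq_or_ne v 0 with rfl | hv
    · simp
    · rw [real_inner_smul_right, mul_inv_cancel_left₀ (norm_ne_zero_iff.2 hv)]
  rw [norm_sub_sq_real, real_inner_comm, hinner, add_sub_cancel_right]
  exact sq_le_sub_two_mul_div_add_sq_div h0 h1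

@[simps]
def frobeniusToEuclidean (d T : ℕ) :
    Matrix (Fin d) (Fin T) ℝ →ₗ[ℝ] EuclideanSpace ℝ (Fin d × Fin T) where
  toFun A := WithLp.toLp 2 fun p => A p.1 p.2
  map_add' _ _ := rfl
  map_smul' _ _ := rfl

lemma frobInner_eq_inner {d T : ℕ} (A B : Matrix (Fin d) (Fin T) ℝ) :
    frobInner A B = ⟪frobeniusToEuclidean d T A, frobeniusToEuclidean d T B⟫ := by
  simp [frobInner, trace, Matrix.mul_apply, PiLp.inner_apply, Fintype.sum_prod_type, mul_comm]

lemma frobNorm_eq_norm {d T : ℕ} (A : Matrix (Fin d) (Fin T) ℝ) :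
    frobNorm A = ‖frobeniusToEuclidean d T A‖ := by
  rw [frobNorm, frobInner_eq_inner, real_inner_self_eq_norm_sq, Real.sqrt_sq (norm_nonneg _)]

/-- Lemma 5.1, inequality (5.1). -/
theorem statement11 {d T : ℕ} (M ε : Matrix (Fin d) (Fin T) ℝ)
    (X : Matrix (Fin d) (Fin T) ℝ) (hX : X = M + ε)
    (r R : Matrix (Fin d) (Fin T) ℝ → ℝ)
    (hr : ∀ A, r A = frobNorm (A - X) ^ 2) (hR : ∀ A, R A = frobNorm (A - M) ^ 2) :
    ∀ lam : ℝ, lam ∈ Set.Ioo (0 : ℝ) 1 →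
      ∀ A : Matrix (Fin d) (Fin T) ℝ, A ≠ M →
        R A ≤ (r A - frobNorm ε ^ 2) / (1 - lam) +
          (1 / (lam * (1 - lam))) * frobInner ε ((frobNorm (A - M))⁻¹ • (A - M)) ^ 2 := by
  rintro lam ⟨h0, h1⟩ A -
  have hAX : A - X = (A - M) - ε := by rw [hX]; abel
  rw [hR, hr, hAX]
  simp only [frobNorm_eq_norm, frobInner_eq_inner, map_sub, map_smul]
  exact norm_sq_le_excess_div_add_inner_sq _ _ h0 h1
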